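/- Fix m, n ∈ ℕ. The total number of diagonally 2-colored Delannoy paths from (0,0) to (m,n) equals ∑_{r=0}^{min(m,n)} 2^r · C(m+n-r, m) · C(m, r), where C(·,·) denotes the binomial coefficient. Concretely: the number of finite lists of steps, each step being one of R (displacement (1,0)), U (displacement (0,1)), D₁ (displacement (1,1)), or D₂ (displacement (1,1)), whose displacements sum to (m,n), equals ∑_{r=0}^{min(m,n)} 2^r · C(m+n-r, m) · C(m, r). -/

import Mathlib

/-!
Classifying a path by its first step shows that the number `c m n` of paths to `(m, n)` satisfies
`c (m+1) (n+1) = c m (n+1) + c (m+1) n + 2 * c m n`, and `c = 1` on both axes. The sum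
`∑ r, k ^ r * C(m+n-r, m) * C(m, r)` obeys the same recurrence with `2` replaced by `k`: applying
Pascal's rule to `C(m+n+2-r, m+1)` and then to `C(m+1, r)` splits it into the three terms.
-/

/-- A step of a diagonally 2-colored Delannoy path: right, up, or a diagonal step in one
of two colors. -/
inductive DStep : Type
  | R : DStep
  | U : DStep
  | D1 : DStep
  | D2 : DStep
deriving DecidableEq

/-- The displacement of a step. -/
def DStep.disp : DStep → ℕ × ℕ
  | .R => (1, 0)
  | .U => (0, 1)
  | .D1 => (1, 1)
  | .D2 => (1, 1)

open Finset

section Walks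

variable {α : Type*} (d : α → ℕ × ℕ)

def walksTo (p : ℕ × ℕ) : Set (List α) := {l | (l.map d).sum = p}

variable {d}

lemma cons_mem_walksTo {a : α} {l : List α} {p : ℕ × ℕ} :
    a :: l ∈ walksTo d p ↔ d a ≤ p ∧ l ∈ walksTo d (p - d a) := by
  simp only [walksTo, Set.mem_ofPred_eq, List.map_cons, List.sum_cons, Prod.ext_iff,
    Prod.le_def, Prod.fst_add, Prod.snd_add, Prod.fst_sub, Prod.snd_sub]
  omega

lemma length_le_of_mem_walksTo (hd : ∀ a, d a ≠ 0) {p : ℕ × ℕ} {l : List α}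
    (hl : l ∈ walksTo d p) : l.length ≤ p.1 + p.2 := by
  induction l generalizing p with
  | nil => simp
  | cons a l ih =>
    obtain ⟨hle, hl⟩ := cons_mem_walksTo.1 hl
    have hlen := ih hl
    have hne := hd a
    simp only [Prod.le_def, Prod.fst_sub, Prod.snd_sub, ne_eq, Prod.ext_iff, Prod.fst_zero,
      Prod.snd_zero] at hle hlen hne
    rw [List.length_cons]
    omega

lemma walksTo_finite [Finite α] (hd : ∀ a, d a ≠ 0) (p : ℕ × ℕ) : (walksTo d p).Finite :=
  (List.finite_length_le α (p.1 + p.2)).subset fun _ ↦ length_le_of_mem_walksTo hd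

lemma walksTo_zero (hd : ∀ a, d a ≠ 0) : walksTo d 0 = {[]} := by
  ext l
  cases l with
  | nil => simp [walksTo]
  | cons a l =>
    simpa [cons_mem_walksTo] using fun h _ ↦ hd a h

lemma walksTo_eq_biUnion [Fintype α] {p : ℕ × ℕ} (hp : p ≠ 0) :
    walksTo d p = ⋃ a ∈ univ.filter (d · ≤ p), List.cons a '' walksTo d (p - d a) := by
  ext l
  cases l with
  | nil => simpa [walksTo] using hp.symm
  | cons a l => simp [cons_mem_walksTo, and_comm]

lemma ncard_walksTo [Fintype α] (hd : ∀ a, d a ≠ 0) {p : ℕ × ℕ} (hp : p ≠ 0) :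
    (walksTo d p).ncard = ∑ a ∈ univ.filter (d · ≤ p), (walksTo d (p - d a)).ncard := by
  have hdisj : (↑(univ.filter (d · ≤ p)) : Set α).PairwiseDisjoint
      fun a ↦ List.cons a '' walksTo d (p - d a) := by
    intro a _ b _ hab
    rw [Function.onFun, Set.disjoint_left]
    rintro _ ⟨l, -, rfl⟩ ⟨l', -, h⟩
    exact hab (List.cons_eq_cons.1 h).1.symm
  rw [walksTo_eq_biUnion hp, ← Finset.set_biUnion_coe,
    (Finset.finite_toSet _).ncard_biUnion (fun _ _ ↦ (walksTo_finite hd _).image _) hdisj,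
    finsum_mem_coe_finset]
  exact sum_congr rfl fun a _ ↦ Set.ncard_image_of_injective _ List.cons_injective

end Walks

def weightedDelannoy (k m n : ℕ) : ℕ :=
  ∑ r ∈ range (min m n + 1), k ^ r * (m + n - r).choose m * m.choose r

namespace weightedDelannoy

lemma eq_sum_range {k m n N : ℕ} (hN : min m n < N) :
    weightedDelannoy k m n = ∑ r ∈ range N, k ^ r * (m + n - r).choose m * m.choose r := by
  refine sum_subset (range_subset_range.2 hN) fun r _ hr ↦ ?_
  simp only [mem_range, Nat.lt_succ_iff, le_min_iff, not_and_or, not_le] at hr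
  by_cases hm : m < r
  · simp [Nat.choose_eq_zero_of_lt hm]
  · simp [Nat.choose_eq_zero_of_lt (show m + n - r < m by omega)]

@[simp] lemma zero_left (k n : ℕ) : weightedDelannoy k 0 n = 1 := by
  simp [weightedDelannoy]

@[simp] lemma zero_right (k m : ℕ) : weightedDelannoy k m 0 = 1 := by
  simp [weightedDelannoy]

lemma succ_succ (k m n : ℕ) :
    weightedDelannoy k (m + 1) (n + 1) =
      weightedDelannoy k m (n + 1) + weightedDelannoy k (m + 1) n +
        k * weightedDelannoy k m n := by
  have pascal_top : weightedDelannoy k (m + 1) (n + 1) =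
      ∑ r ∈ range (m + 2), k ^ r * (m + 1 + n - r).choose m * (m + 1).choose r +
        weightedDelannoy k (m + 1) n := by
    rw [eq_sum_range (N := m + 2) (by omega), eq_sum_range (N := m + 2) (by omega),
      ← sum_add_distrib]
    refine sum_congr rfl fun r hr ↦ ?_
    rw [mem_range] at hr
    rw [show m + 1 + (n + 1) - r = m + 1 + n - r + 1 by omega, Nat.choose_succ_succ']
    ring
  have pascal_bottom :
      ∑ r ∈ range (m + 2), k ^ r * (m + 1 + n - r).choose m * (m + 1).choose r =
        weightedDelannoy k m (n + 1) + k * weightedDelannoy k m n := by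
    rw [eq_sum_range (n := n + 1) (N := m + 2) (by omega), eq_sum_range (N := m + 1) (by omega),
      sum_range_succ' _ (m + 1), sum_range_succ' _ (m + 1), mul_sum,
      add_right_comm (∑ r ∈ range (m + 1), _), ← sum_add_distrib]
    congr 1
    · refine sum_congr rfl fun r _ ↦ ?_
      rw [show m + 1 + n - (r + 1) = m + n - r by omega,
        show m + (n + 1) - (r + 1) = m + n - r by omega,
        Nat.choose_succ_succ']
      ring
    · simp [add_right_comm, add_assoc]
  rw [pascal_top, pascal_bottom]
  ring

end weightedDelannoy

instance : Fintype DStep := ⟨{.R, .U, .D1, .D2}, fun a ↦ by cases a <;> simp⟩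

lemma DStep.disp_ne_zero (a : DStep) : a.disp ≠ 0 := by
  cases a <;> simp [DStep.disp]

lemma DStep.sum_univ {β : Type*} [AddCommMonoid β] (f : DStep → β) :
    ∑ a, f a = f .R + f .U + f .D1 + f .D2 := by
  simp [univ, Fintype.elems, add_assoc]

lemma ncard_walksTo_disp (m n : ℕ) :
    (walksTo DStep.disp (m, n)).ncard = weightedDelannoy 2 m n := by
  induction m generalizing n with
  | zero =>
    induction n with
    | zero => simp [Prod.mk_zero_zero, walksTo_zero DStep.disp_ne_zero]
    | succ n ih =>
      rw [ncard_walksTo DStep.disp_ne_zero (by simp), sum_filter, DStep.sum_univ]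
      simpa [DStep.disp] using ih
  | succ m ihm =>
    induction n with
    | zero =>
      rw [ncard_walksTo DStep.disp_ne_zero (by simp), sum_filter, DStep.sum_univ]
      simpa [DStep.disp] using ihm 0
    | succ n ihn =>
      rw [ncard_walksTo DStep.disp_ne_zero (by simp), sum_filter, DStep.sum_univ,
        weightedDelannoy.succ_succ]
      simp only [DStep.disp, Prod.mk_le_mk, le_add_iff_nonneg_left, zero_le, and_self, ↓reduceIte,
        Prod.mk_sub_mk, add_tsub_cancel_right, tsub_zero, ihm, ihn]
      ring

/-- The total number of diagonally 2-colored Delannoy paths from `(0,0)` to `(m,n)` is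
`∑_{r=0}^{min(m,n)} 2^r · C(m+n-r, m) · C(m, r)`. -/
theorem stmt14 (m n : ℕ) :
    {l : List DStep | (l.map DStep.disp).sum = (m, n)}.ncard
      = ∑ r ∈ Finset.range (min m n + 1), 2 ^ r * (m + n - r).choose m * m.choose r :=
  ncard_walksTo_disp m n
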